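/- arXiv:1807.06249 — 6 statements merged into one kernel-verified Lean document; each statement's English description precedes it below -/
import Mathlib

section
/- Let n ≥ 2 be an integer. Consider the linear program: maximize N = s + 2t over real s, t ≥ 0 subject to n²(n+1)² − s − (n²+1)t ≥ 0 and (n² − t)(n²(n+1)² − 2s − (n−1)²t) ≥ 0. Then the maximum value of N equals 2n²(n+1) when n ≤ 3 and equals n²(n+1)²/2 when n ≥ 3. -/
lemma ub_le3 (x s t : ℝ) (hx2 : 2 ≤ x) (hx3 : x ≤ 3) (hs : 0 ≤ s) (ht : 0 ≤ t)
    (h1 : 0 ≤ x^2 * (x + 1)^2 - s - (x^2 + 1) * t)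
    (h2 : 0 ≤ (x^2 - t) * (x^2 * (x + 1)^2 - 2 * s - (x - 1)^2 * t)) :
    s + 2 * t ≤ 2 * x^2 * (x + 1) := by
  rcases lt_or_ge t (x^2) with hlt | hge
  · have hB : 0 ≤ x^2 * (x + 1)^2 - 2 * s - (x - 1)^2 * t := by
      nlinarith [h2, sub_pos.2 hlt]
    nlinarith [mul_nonneg (mul_nonneg (sub_nonneg.2 hlt.le) (sub_nonneg.2 hx3)) (by linarith : (0:ℝ) ≤ x + 1)]
  · nlinarith [mul_nonneg (sub_nonneg.2 hge) (by nlinarith : (0:ℝ) ≤ x^2 - 1)]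

lemma ub_ge3 (x s t : ℝ) (hx3 : 3 ≤ x) (hs : 0 ≤ s) (ht : 0 ≤ t)
    (h1 : 0 ≤ x^2 * (x + 1)^2 - s - (x^2 + 1) * t)
    (h2 : 0 ≤ (x^2 - t) * (x^2 * (x + 1)^2 - 2 * s - (x - 1)^2 * t)) :
    s + 2 * t ≤ x^2 * (x + 1)^2 / 2 := by
  rcases lt_or_ge t (x^2) with hlt | hge
  · have hB : 0 ≤ x^2 * (x + 1)^2 - 2 * s - (x - 1)^2 * t := by
      nlinarith [h2, sub_pos.2 hlt]
    nlinarith [mul_nonneg ht (by nlinarith : (0:ℝ) ≤ (x - 1)^2 - 4)]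
  · nlinarith [mul_nonneg (sub_nonneg.2 hge) (by nlinarith : (0:ℝ) ≤ x^2 - 1),
      sq_nonneg x, mul_nonneg (mul_nonneg (by linarith : (0:ℝ) ≤ x) (by linarith : (0:ℝ) ≤ x)) (by linarith : (0:ℝ) ≤ x - 3)]

theorem stmt_7 (n : ℕ) (hn : 2 ≤ n)
    (S : Set ℝ)
    (hS : S = {N : ℝ | ∃ s t : ℝ, 0 ≤ s ∧ 0 ≤ t ∧
      0 ≤ (n : ℝ)^2 * (n + 1)^2 - s - ((n : ℝ)^2 + 1) * t ∧
      0 ≤ ((n : ℝ)^2 - t) * ((n : ℝ)^2 * (n + 1)^2 - 2 * s - ((n : ℝ) - 1)^2 * t) ∧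
      N = s + 2 * t}) :
    (n ≤ 3 → IsGreatest S (2 * (n : ℝ)^2 * (n + 1))) ∧
    (3 ≤ n → IsGreatest S ((n : ℝ)^2 * (n + 1)^2 / 2)) := by
  subst hS
  have hx2 : (2:ℝ) ≤ (n:ℝ) := by exact_mod_cast hn
  constructor
  · intro h
    have hx3 : (n:ℝ) ≤ 3 := by exact_mod_cast h
    constructor
    · exact ⟨2 * (n:ℝ)^3, (n:ℝ)^2, by positivity, by positivity,
        le_of_eq (by ring), le_of_eq (by ring), by ring⟩
    · rintro N ⟨s, t, hs, ht, h1, h2, rfl⟩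
      exact ub_le3 _ _ _ hx2 hx3 hs ht h1 h2
  · intro h
    have hx3 : (3:ℝ) ≤ (n:ℝ) := by exact_mod_cast h
    constructor
    · refine ⟨(n:ℝ)^2 * (n + 1)^2 / 2, 0, by positivity, le_refl 0, ?_,
        le_of_eq (by ring), by ring⟩
      have : (n:ℝ)^2 * (n + 1)^2 - (n:ℝ)^2 * (n + 1)^2 / 2 - ((n:ℝ)^2 + 1) * 0
          = (n:ℝ)^2 * (n + 1)^2 / 2 := by ring
      rw [this]; positivity
    · rintro N ⟨s, t, hs, ht, h1, h2, rfl⟩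
      exact ub_ge3 _ _ _ hx3 hs ht h1 h2
end

section
/- For any positive integers n and any n ∈ ℕ, the (n+3)×(n+3) symmetric matrix with upper-left block (9/10)I_n + (1/10)J_n, lower-right block (9/10)I₃ + (1/10)J₃, and off-diagonal blocks all of whose entries equal −1/5, is positive semidefinite. Equivalently, (9/10)I₃ + (1/10 − 2n/(5(9+n)))J₃ is positive semidefinite for every n ≥ 0. -/
/-! The block matrix is the sum of the block-diagonal matrix
`diag((9/10) I_n, (9/10) I_3 - (3/10) J_3)` and `(1/10) w wᵀ` with `w = (1, …, 1, -2, -2, -2)`.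
Both summands are positive semidefinite because `a I_k + c J_k` has eigenvalues `a` and
`a + k c`; the second matrix of the theorem is of this form with `c ≥ -3/10`. -/

namespace Matrix

variable {m n R : Type*} [Fintype m] [Fintype n]

lemma PosSemidef.fromBlocks_zero [Ring R] [PartialOrder R] [AddLeftMono R] [StarRing R]
    {A : Matrix m m R} {D : Matrix n n R} (hA : A.PosSemidef) (hD : D.PosSemidef) :
    (fromBlocks A 0 0 D).PosSemidef := by
  refine .of_dotProduct_mulVec_nonneg (hA.isHermitian.fromBlocks (by simp) hD.isHermitian)
    fun x => ?_
  obtain ⟨u, v, rfl⟩ : ∃ u v, x = Sum.elim u v := ⟨_, _, (Sum.elim_comp_inl_inr x).symm⟩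
  have hstar : star (Sum.elim u v) = Sum.elim (star u) (star v) := by ext (i | i) <;> rfl
  simpa [fromBlocks_mulVec, hstar] using
    add_nonneg (hA.dotProduct_mulVec_nonneg u) (hD.dotProduct_mulVec_nonneg v)

lemma posSemidef_allOnes [Ring R] [PartialOrder R] [StarRing R] [StarOrderedRing R] :
    (of fun (_ _ : n) => (1 : R)).PosSemidef := by
  simpa [vecMulVec] using posSemidef_vecMulVec_self_star (1 : n → R)

lemma posSemidef_card_smul_one_sub_allOnes [DecidableEq n] :
    ((Fintype.card n : ℝ) • 1 - of fun (_ _ : n) => (1 : ℝ)).PosSemidef := by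
  refine .of_dotProduct_mulVec_nonneg ?_ fun x => ?_
  · ext i j; simp [one_apply, eq_comm]
  · have hquad : star x ⬝ᵥ (((Fintype.card n : ℝ) • 1 - of fun (_ _ : n) => (1 : ℝ)) *ᵥ x)
        = Fintype.card n * ∑ i, x i ^ 2 - (∑ i, x i) ^ 2 := by
      simp only [sub_mulVec, smul_mulVec, one_mulVec, star_trivial, dotProduct_sub,
        dotProduct_smul, smul_eq_mul]
      simp only [dotProduct, Finset.mul_sum, mulVec, of_apply, one_mul, sq, Finset.sum_mul,
        sub_right_inj]
      exact Finset.sum_comm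
    rw [hquad, sub_nonneg]
    simpa using sq_sum_le_card_mul_sum_sq (s := Finset.univ) (f := x)

lemma posSemidef_smul_one_add_smul_allOnes [DecidableEq n] {a c : ℝ} (ha : 0 ≤ a)
    (hac : 0 ≤ a + Fintype.card n * c) :
    (a • (1 : Matrix n n ℝ) + c • of fun _ _ => 1).PosSemidef := by
  obtain hn | hn := (Fintype.card n).eq_zero_or_pos
  · have : IsEmpty n := Fintype.card_eq_zero_iff.mp hn
    simpa [Subsingleton.elim _ (0 : Matrix n n ℝ)] using PosSemidef.zero
  have hk : (0 : ℝ) < Fintype.card n := by exact_mod_cast hn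
  have hsplit : a • (1 : Matrix n n ℝ) + c • (of fun _ _ => 1)
      = (a / Fintype.card n) • ((Fintype.card n : ℝ) • 1 - of fun _ _ => 1)
        + ((a + Fintype.card n * c) / Fintype.card n) • (of fun _ _ => 1) := by
    ext i j
    simp only [add_apply, smul_apply, sub_apply, one_apply, of_apply, smul_eq_mul]
    field_simp
    split_ifs <;> ring
  rw [hsplit]
  exact (posSemidef_card_smul_one_sub_allOnes.smul (by positivity)).add
    (posSemidef_allOnes.smul (by positivity))

end Matrix

open Matrix

lemma posSemidef_pillar_fromBlocks (n : ℕ) :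
    (fromBlocks ((9/10 : ℝ) • (1 : Matrix (Fin n) (Fin n) ℝ) + (1/10 : ℝ) • of fun _ _ => 1)
      (of fun _ _ => -1/5) (of fun _ _ => -1/5)
      ((9/10 : ℝ) • (1 : Matrix (Fin 3) (Fin 3) ℝ) + (1/10 : ℝ) • of fun _ _ => 1)).PosSemidef := by
  let w : Fin n ⊕ Fin 3 → ℝ := Sum.elim 1 (-2)
  have hsplit : fromBlocks ((9/10 : ℝ) • 1 + (1/10 : ℝ) • of fun _ _ => 1)
      (of fun _ _ => -1/5) (of fun _ _ => -1/5) ((9/10 : ℝ) • 1 + (1/10 : ℝ) • of fun _ _ => 1)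
      = fromBlocks ((9/10 : ℝ) • 1) 0 0 ((9/10 : ℝ) • 1 + (-3/10 : ℝ) • of fun _ _ => 1)
        + (1/10 : ℝ) • vecMulVec w (star w) := by
    ext (i | i) (j | j) <;> norm_num [w, vecMulVec, one_apply]
    split_ifs <;> norm_num
  rw [hsplit]
  refine .add (.fromBlocks_zero (PosSemidef.one.smul (by norm_num)) ?_)
    ((posSemidef_vecMulVec_self_star w).smul (by norm_num))
  exact posSemidef_smul_one_add_smul_allOnes (by norm_num) (by norm_num)

theorem stmt_9 (n : ℕ) :
    (Matrix.fromBlocks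
      ((9/10 : ℝ) • (1 : Matrix (Fin n) (Fin n) ℝ) + (1/10 : ℝ) • (Matrix.of fun _ _ => (1 : ℝ)))
      (Matrix.of fun (_ : Fin n) (_ : Fin 3) => (-1/5 : ℝ))
      (Matrix.of fun (_ : Fin 3) (_ : Fin n) => (-1/5 : ℝ))
      ((9/10 : ℝ) • (1 : Matrix (Fin 3) (Fin 3) ℝ) + (1/10 : ℝ) • (Matrix.of fun _ _ => (1 : ℝ)))).PosSemidef
    ∧
    ((9/10 : ℝ) • (1 : Matrix (Fin 3) (Fin 3) ℝ)
      + (1/10 - 2 * n / (5 * (9 + n)) : ℝ) • (Matrix.of fun _ _ => (1 : ℝ))).PosSemidef := by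
  refine ⟨posSemidef_pillar_fromBlocks n, posSemidef_smul_one_add_smul_allOnes (by norm_num) ?_⟩
  have hfrac : 2 * (n : ℝ) / (5 * (9 + n)) ≤ 2 / 5 := by
    rw [div_le_div_iff₀ (by positivity) (by norm_num)]
    linarith
  simp only [Fintype.card_fin]
  push_cast
  linarith
end

section
/- Let X be an equiangular set of unit vectors in ℝ^r with common angle α, where r < 1/α². Then |X| ≤ r(1 − α²)/(1 − rα²). -/
/-!
The map `x ↦ x ⊗ x` turns inner products into their squares, and pairing `x ⊗ x` with the
canonical tensor `∑ₖ bₖ ⊗ bₖ` of an orthonormal basis gives `‖x‖²`, while that tensor has squared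
norm `r`. Cauchy–Schwarz between `∑_{x ∈ X} x ⊗ x` and the canonical tensor therefore gives
`|X|² ≤ r ∑_{x,y ∈ X} ⟪x, y⟫²`, and for an equiangular set of unit vectors the right-hand sum is
`|X| (1 + (|X| - 1) α²)`. Solving for `|X|` uses `r α² < 1`.
-/

open Finset InnerProductSpace TensorProduct Module

section CanonicalTensor

variable {E : Type*} [NormedAddCommGroup E] [InnerProductSpace ℝ E] [FiniteDimensional ℝ E]

theorem inner_tmul_self_canonicalCovariantTensor (x : E) :
    ⟪x ⊗ₜ[ℝ] x, canonicalCovariantTensor E⟫_ℝ = ‖x‖ ^ 2 := by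
  rw [canonicalCovariantTensor, inner_sum, ← real_inner_self_eq_norm_sq,
    ← (stdOrthonormalBasis ℝ E).sum_inner_mul_inner x x]
  simp only [inner_tmul, real_inner_comm x]

theorem inner_self_canonicalCovariantTensor :
    ⟪canonicalCovariantTensor E, canonicalCovariantTensor E⟫_ℝ = finrank ℝ E := by
  conv_lhs => enter [2]; rw [canonicalCovariantTensor]
  simp [sum_inner, inner_tmul_self_canonicalCovariantTensor]

theorem sq_sum_norm_sq_le_finrank_mul_sum_sum_inner_sq {ι : Type*} (s : Finset ι) (v : ι → E) :
    (∑ i ∈ s, ‖v i‖ ^ 2) ^ 2 ≤ finrank ℝ E * ∑ i ∈ s, ∑ j ∈ s, ⟪v i, v j⟫_ℝ ^ 2 := by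
  set S := ∑ i ∈ s, v i ⊗ₜ[ℝ] v i
  have hSt : ⟪S, canonicalCovariantTensor E⟫_ℝ = ∑ i ∈ s, ‖v i‖ ^ 2 := by
    simp only [S, sum_inner, inner_tmul_self_canonicalCovariantTensor]
  have hSS : ⟪S, S⟫_ℝ = ∑ i ∈ s, ∑ j ∈ s, ⟪v i, v j⟫_ℝ ^ 2 := by
    simp only [S, sum_inner, inner_sum, inner_tmul, sq]
    exact sum_comm
  have hcs := real_inner_mul_inner_self_le S (canonicalCovariantTensor E)
  rw [hSt, hSS, inner_self_canonicalCovariantTensor] at hcs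
  linarith

end CanonicalTensor

theorem sum_sum_inner_sq_of_equiangular {E : Type*} [NormedAddCommGroup E] [InnerProductSpace ℝ E]
    {X : Finset E} {α : ℝ} (hunit : ∀ x ∈ X, ‖x‖ = 1)
    (hangle : ∀ x ∈ X, ∀ y ∈ X, x ≠ y → ⟪x, y⟫_ℝ = α ∨ ⟪x, y⟫_ℝ = -α) :
    ∑ x ∈ X, ∑ y ∈ X, ⟪x, y⟫_ℝ ^ 2 = #X * (1 + (#X - 1) * α ^ 2) := by
  classical
  have hrow : ∀ x ∈ X, ∑ y ∈ X, ⟪x, y⟫_ℝ ^ 2 = 1 + (#X - 1) * α ^ 2 := by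
    intro x hx
    have hoff : ∀ y ∈ X.erase x, ⟪x, y⟫_ℝ ^ 2 = α ^ 2 := by
      intro y hy
      rcases hangle x hx y (mem_of_mem_erase hy) (ne_of_mem_erase hy).symm with h | h <;>
        simp [h]
    rw [← add_sum_erase X _ hx, sum_congr rfl hoff, real_inner_self_eq_norm_sq, hunit x hx,
      sum_const, card_erase_of_mem hx, nsmul_eq_mul, Nat.cast_pred (card_pos.mpr ⟨x, hx⟩)]
    ring
  rw [sum_congr rfl hrow, sum_const, nsmul_eq_mul]

theorem stmt_13 (r : ℕ) (α : ℝ) (hα0 : 0 ≤ α) (hα1 : α < 1)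
    (X : Finset (EuclideanSpace ℝ (Fin r)))
    (hunit : ∀ x ∈ X, ‖x‖ = 1)
    (hangle : ∀ x ∈ X, ∀ y ∈ X, x ≠ y →
      (inner ℝ x y : ℝ) = α ∨ (inner ℝ x y : ℝ) = -α)
    (hr : (r : ℝ) < 1 / α ^ 2) :
    (X.card : ℝ) ≤ r * (1 - α ^ 2) / (1 - r * α ^ 2) := by
  have hrα : r * α ^ 2 < 1 := by
    rcases eq_or_ne α 0 with rfl | hα
    · simp
    · exact (lt_div_iff₀ (by positivity)).mp hr
  have hα2 : α ^ 2 < 1 := by nlinarith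
  have hnorms : ∑ x ∈ X, ‖id x‖ ^ 2 = #X := by
    simp [sum_congr rfl fun x hx => congrArg (· ^ 2) (hunit x hx)]
  have hframe := sq_sum_norm_sq_le_finrank_mul_sum_sum_inner_sq X id
  rw [hnorms, finrank_euclideanSpace_fin] at hframe
  simp only [id, sum_sum_inner_sq_of_equiangular hunit hangle] at hframe
  rw [le_div_iff₀ (by linarith)]
  rcases (Nat.cast_nonneg (α := ℝ) #X).eq_or_lt with hX | hX
  · rw [← hX]; nlinarith
  · have hcard : (#X : ℝ) ≤ r * (1 + (#X - 1) * α ^ 2) :=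
      le_of_mul_le_mul_left (by linarith) hX
    linarith
end

section
/- Let X be an equiangular set of unit vectors in ℝ^r with angle α ∈ (0,1) and |X| > 2r. Then 1/α is an odd integer. -/
/-!
The Gram matrix `G` of `X` has rank at most `r`, and `G = 1 + α S` where `S` is the Seidel matrix,
an integer matrix with zero diagonal and `±1` entries elsewhere. Hence `λ = -1/α` is an eigenvalue
of `S` of geometric, and so also algebraic, multiplicity at least `|X| - r > |X| / 2`. The minimal
polynomial of `λ` over `ℚ` is separable, so it divides the characteristic polynomial of `S` to that
power; comparing degrees, it is linear, and `λ` is a rational algebraic integer, i.e. an integer.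
For parity, take `Y ⊆ X` of even size `s > r`: the Seidel matrix of `Y` minus `λ` is singular, but
for even `λ` it reduces mod 2 to `J + 1`, which squares to `1` because `J² = s J = 0`.
-/

open Polynomial Module
open scoped RealInnerProductSpace

section Multiplicity

variable {K L : Type*} [Field K] [PerfectField K] [Field L] [Algebra K L]

theorem minpoly_pow_dvd_of_le_rootMultiplicity {p : K[X]} (hp : p ≠ 0) {x : L} {m : ℕ}
    (hm : m ≤ (p.map (algebraMap K L)).rootMultiplicity x) : minpoly K x ^ m ∣ p := by
  induction m generalizing p with
  | zero => simp
  | succ m ih =>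
    have hroot : aeval x p = 0 := by
      rw [aeval_def, eval₂_eq_eval_map]
      exact (rootMultiplicity_pos'.1 (by omega)).2
    have hx : IsIntegral K x := IsAlgebraic.isIntegral ⟨p, hp, hroot⟩
    obtain ⟨t, rfl⟩ := minpoly.dvd K x hroot
    have hsimple : ((minpoly K x).map (algebraMap K L)).rootMultiplicity x ≤ 1 :=
      rootMultiplicity_le_one_of_separable
        (PerfectField.separable_of_irreducible (minpoly.irreducible hx)).map x
    rw [Polynomial.map_mul,
      rootMultiplicity_mul (by rw [← Polynomial.map_mul]; exact map_ne_zero hp)] at hm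
    rw [pow_succ']
    exact mul_dvd_mul_left _ (ih (right_ne_zero_of_mul hp) (by omega))

theorem mem_range_algebraMap_of_natDegree_lt_two_mul_rootMultiplicity {p : K[X]} (hp : p ≠ 0)
    {x : L} (h : p.natDegree < 2 * (p.map (algebraMap K L)).rootMultiplicity x) :
    x ∈ (algebraMap K L).range := by
  have hroot : aeval x p = 0 := by
    rw [aeval_def, eval₂_eq_eval_map]
    exact (rootMultiplicity_pos'.1 (by omega)).2
  have hx : IsIntegral K x := IsAlgebraic.isIntegral ⟨p, hp, hroot⟩
  by_contra hrange
  have hdeg := (minpoly.two_le_natDegree_iff hx).2 hrange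
  have hdvd := natDegree_le_of_dvd (minpoly_pow_dvd_of_le_rootMultiplicity (x := x) hp le_rfl) hp
  rw [natDegree_pow] at hdvd
  nlinarith

end Multiplicity

theorem exists_intCast_eq_of_natDegree_lt_two_mul_rootMultiplicity {K : Type*} [Field K]
    [CharZero K] {p : ℤ[X]} (hp : p.Monic) {x : K}
    (h : p.natDegree < 2 * (p.map (Int.castRingHom K)).rootMultiplicity x) :
    ∃ l : ℤ, (l : K) = x := by
  have hroot : aeval x p = 0 := by
    rw [aeval_def, eval₂_eq_eval_map, algebraMap_int_eq]
    exact (rootMultiplicity_pos'.1 (by omega)).2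
  have hmap : (p.map (Int.castRingHom ℚ)).map (algebraMap ℚ K) = p.map (Int.castRingHom K) := by
    rw [Polynomial.map_map]; congr 1; ext; simp
  obtain ⟨c, rfl⟩ := mem_range_algebraMap_of_natDegree_lt_two_mul_rootMultiplicity (x := x)
    (hp.map (Int.castRingHom ℚ)).ne_zero (by rwa [hp.natDegree_map, hmap])
  have hc : IsIntegral ℤ c :=
    (isIntegral_algebraMap_iff (algebraMap ℚ K).injective).1 ⟨p, hp, hroot⟩
  obtain ⟨l, rfl⟩ := IsIntegrallyClosed.isIntegral_iff.1 hc
  exact ⟨l, by simp⟩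

namespace Matrix

variable {ι : Type*} [Fintype ι] [DecidableEq ι]

theorem card_le_rank_sub_add_rootMultiplicity {K : Type*} [Field K] (A : Matrix ι ι K) (μ : K) :
    Fintype.card ι ≤ (A - μ • 1).rank + A.charpoly.rootMultiplicity μ := by
  have hgeom := LinearMap.finrank_eigenspace_le (toLin' A) μ
  rw [charpoly_toLin', Module.End.eigenspace_def, Module.End.one_eq_id, ← toLin'_one, ← map_smul,
    ← map_sub] at hgeom
  have hrank_nullity := LinearMap.finrank_range_add_finrank_ker (toLin' (A - μ • 1))
  rw [finrank_fintype_fun_eq_card] at hrank_nullity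
  rw [rank, ← toLin'_apply']
  omega

omit [DecidableEq ι] in
theorem rank_gram_le_finrank {𝕜 E : Type*} [RCLike 𝕜] [NormedAddCommGroup E]
    [InnerProductSpace 𝕜 E] [FiniteDimensional 𝕜 E] (v : ι → E) :
    (gram 𝕜 v).rank ≤ finrank 𝕜 E := by
  rw [gram_eq_conjTranspose_mul (stdOrthonormalBasis 𝕜 E)]
  exact (rank_mul_le_right _ _).trans ((rank_le_card_height _).trans (by simp))

theorem ones_add_one_mul_self_zmod_two (hcard : Even (Fintype.card ι)) :
    (of (fun _ _ : ι => (1 : ZMod 2)) + 1) * (of (fun _ _ : ι => (1 : ZMod 2)) + 1) = 1 := by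
  have hJ : of (fun _ _ : ι => (1 : ZMod 2)) * of (fun _ _ => 1) = 0 := by
    ext i j
    simp [mul_apply, (ZMod.natCast_eq_zero_iff_even).2 hcard]
  have hJJ : of (fun _ _ : ι => (1 : ZMod 2)) + of (fun _ _ => 1) = 0 := by
    ext
    exact CharTwo.add_self_eq_zero (1 : ZMod 2)
  rw [add_mul, mul_add, mul_add, hJ, mul_one, one_mul, one_mul, zero_add, ← add_assoc, hJJ,
    zero_add]

theorem odd_of_rank_sub_intCast_smul_lt_card {K : Type*} [Field K] [CharZero K]
    (S : Matrix ι ι ℤ) (hdiag : ∀ i, Even (S i i)) (hoff : ∀ i j, i ≠ j → Odd (S i j))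
    (hcard : Even (Fintype.card ι)) {l : ℤ}
    (hrank : (S.map (Int.cast : ℤ → K) - (l : K) • 1).rank < Fintype.card ι) : Odd l := by
  set N := S - l • 1
  have hNK : N.map (Int.cast : ℤ → K) = S.map Int.cast - (l : K) • 1 := by
    ext i j
    by_cases h : i = j <;> simp [N, intCast_apply, h]
  have hdet : N.det = 0 := by
    by_contra hne
    have hunit : IsUnit (N.map (Int.cast : ℤ → K)) := by
      rw [isUnit_iff_isUnit_det, ← Int.cast_det]
      exact isUnit_iff_ne_zero.2 (Int.cast_ne_zero.2 hne)
    rw [← hNK, rank_of_isUnit _ hunit] at hrank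
    exact hrank.false
  by_contra heven
  rw [Int.not_odd_iff_even] at heven
  have hN2 : N.map (Int.cast : ℤ → ZMod 2) = of (fun _ _ => 1) + 1 := by
    ext i j
    by_cases h : i = j
    · subst h
      simp only [N, zsmul_eq_mul, mul_one, map_apply, sub_apply, intCast_apply, ↓reduceIte,
        Int.cast_eq, Int.cast_sub, (ZMod.intCast_eq_zero_iff_even).2 (hdiag i),
        (ZMod.intCast_eq_zero_iff_even).2 heven, sub_self, add_apply, of_apply, one_apply_eq]
      decide
    · simp [N, intCast_apply, h, (ZMod.intCast_eq_one_iff_odd).2 (hoff i j h)]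
  have := congrArg det (ones_add_one_mul_self_zmod_two (ι := ι) hcard)
  rw [det_mul, det_one, ← hN2, ← Int.cast_det, hdet] at this
  simp at this

theorem exists_intCast_eq_of_two_mul_rank_sub_smul_lt_card {K : Type*} [Field K] [CharZero K]
    (S : Matrix ι ι ℤ) {μ : K} (h : 2 * (S.map (Int.cast : ℤ → K) - μ • 1).rank < Fintype.card ι) :
    ∃ l : ℤ, (l : K) = μ := by
  refine exists_intCast_eq_of_natDegree_lt_two_mul_rootMultiplicity S.charpoly_monic ?_
  have hmult := card_le_rank_sub_add_rootMultiplicity (S.map (Int.castRingHom K)) μ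
  rw [charpoly_map] at hmult
  have hcast : (S.map (Int.castRingHom K) - μ • 1).rank =
      (S.map (Int.cast : ℤ → K) - μ • 1).rank := rfl
  rw [S.charpoly_natDegree_eq_dim]
  omega

end Matrix

section Seidel

variable {ι E : Type*} [NormedAddCommGroup E] [InnerProductSpace ℝ E]

noncomputable def seidelMatrix [DecidableEq ι] (α : ℝ) (v : ι → E) : Matrix ι ι ℤ :=
  Matrix.of fun i j => if i = j then 0 else if ⟪v i, v j⟫ = α then 1 else -1

variable [DecidableEq ι] {α : ℝ} {v : ι → E}

@[simp]
theorem seidelMatrix_apply_self (i : ι) : seidelMatrix α v i i = 0 := by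
  simp [seidelMatrix]

theorem odd_seidelMatrix_apply {i j : ι} (h : i ≠ j) : Odd (seidelMatrix α v i j) := by
  simp only [seidelMatrix, Matrix.of_apply, if_neg h]
  split_ifs <;> decide

theorem seidelMatrix_map_intCast (hα : α ≠ 0) (hunit : ∀ i, ‖v i‖ = 1)
    (hangle : ∀ i j, i ≠ j → ⟪v i, v j⟫ = α ∨ ⟪v i, v j⟫ = -α) :
    (seidelMatrix α v).map (Int.cast : ℤ → ℝ) = α⁻¹ • (Matrix.gram ℝ v - 1) := by
  ext i j
  by_cases h : i = j
  · subst h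
    simp [Matrix.gram_apply, hunit]
  · rcases hangle i j h with hij | hij
    · simp [seidelMatrix, Matrix.gram_apply, h, hij, hα]
    · have hne : ¬ -α = α := fun h' => hα (by linarith)
      simp [seidelMatrix, Matrix.gram_apply, h, hij, hα, hne]

theorem rank_seidelMatrix_sub_le [Fintype ι] [FiniteDimensional ℝ E] (hα : α ≠ 0)
    (hunit : ∀ i, ‖v i‖ = 1)
    (hangle : ∀ i j, i ≠ j → ⟪v i, v j⟫ = α ∨ ⟪v i, v j⟫ = -α) :
    ((seidelMatrix α v).map (Int.cast : ℤ → ℝ) - (-α⁻¹) • 1).rank ≤ finrank ℝ E := by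
  rw [seidelMatrix_map_intCast hα hunit hangle, neg_smul, sub_neg_eq_add, ← smul_add,
    sub_add_cancel, Matrix.rank_smul_of_mem_nonZeroDivisors _
      (mem_nonZeroDivisors_of_ne_zero (inv_ne_zero hα))]
  exact Matrix.rank_gram_le_finrank v

end Seidel

theorem stmt_14_general (r : ℕ) (α : ℝ) (hα0 : 0 < α)
    (X : Finset (EuclideanSpace ℝ (Fin r)))
    (hunit : ∀ x ∈ X, ‖x‖ = 1)
    (hangle : ∀ x ∈ X, ∀ y ∈ X, x ≠ y →
      (inner ℝ x y : ℝ) = α ∨ (inner ℝ x y : ℝ) = -α)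
    (hcard : 2 * r < X.card) :
    ∃ m : ℤ, Odd m ∧ 1 / α = (m : ℝ) := by
  classical
  have hr : 0 < r := by
    obtain ⟨x, hx⟩ := X.card_pos.1 (by omega)
    rw [← finrank_euclideanSpace_fin (𝕜 := ℝ) (n := r)]
    exact finrank_pos_iff_exists_ne_zero.2 ⟨x, norm_ne_zero_iff.1 (by simp [hunit x hx])⟩
  have hrank (Y : Finset _) (hY : Y ⊆ X) :
      ((seidelMatrix α ((↑) : Y → EuclideanSpace ℝ (Fin r))).map (Int.cast : ℤ → ℝ) -
        (-α⁻¹) • 1).rank ≤ r := by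
    have hunitY (x : Y) : ‖(x : EuclideanSpace ℝ (Fin r))‖ = 1 := hunit x (hY x.2)
    have hangleY (x y : Y) (hxy : x ≠ y) : ⟪(x : EuclideanSpace ℝ (Fin r)), y⟫ = α ∨
        ⟪(x : EuclideanSpace ℝ (Fin r)), y⟫ = -α :=
      hangle x (hY x.2) y (hY y.2) (Subtype.coe_injective.ne hxy)
    exact (rank_seidelMatrix_sub_le hα0.ne' hunitY hangleY).trans_eq finrank_euclideanSpace_fin
  obtain ⟨l, hl⟩ := Matrix.exists_intCast_eq_of_two_mul_rank_sub_smul_lt_card (K := ℝ)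
    (seidelMatrix α ((↑) : X → EuclideanSpace ℝ (Fin r))) (μ := -α⁻¹)
    (by rw [Fintype.card_coe]; have := hrank X subset_rfl; omega)
  -- `2 * (r / 2 + 1)` is whichever of `r + 1`, `r + 2` is even; it is at most `|X|` as `r ≥ 1`
  obtain ⟨Y, hYX, hYcard⟩ := X.exists_subset_card_eq (n := 2 * (r / 2 + 1)) (by omega)
  have hl_odd : Odd l := by
    refine Matrix.odd_of_rank_sub_intCast_smul_lt_card (K := ℝ)
      (seidelMatrix α ((↑) : Y → EuclideanSpace ℝ (Fin r))) (fun _ => by simp)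
      (fun _ _ => odd_seidelMatrix_apply) (by simp [hYcard]) ?_
    rw [hl, Fintype.card_coe, hYcard]
    have := hrank Y hYX
    omega
  exact ⟨-l, hl_odd.neg, by push_cast [hl]; rw [one_div, neg_neg]⟩

theorem stmt_14 (r : ℕ) (α : ℝ) (hα0 : 0 < α) (hα1 : α < 1)
    (X : Finset (EuclideanSpace ℝ (Fin r)))
    (hunit : ∀ x ∈ X, ‖x‖ = 1)
    (hangle : ∀ x ∈ X, ∀ y ∈ X, x ≠ y →
      (inner ℝ x y : ℝ) = α ∨ (inner ℝ x y : ℝ) = -α)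
    (hcard : 2 * r < X.card) :
    ∃ m : ℤ, Odd m ∧ 1 / α = (m : ℝ) :=
  stmt_14_general r α hα0 X hunit hangle hcard
end

section
/- Let A be a (2r−1)×(2r−1) real symmetric matrix with zero diagonal and all off-diagonal entries odd integers, and suppose M = (2r−1)I − A² is positive semidefinite of rank 1 with all diagonal entries of M equal to 1. Then every entry of M lies in {1, −1}, and after conjugating by a diagonal ±1 matrix, M = J. -/
theorem stmt_17 (r : ℕ) (hr : 1 ≤ r)
    (A : Matrix (Fin (2 * r - 1)) (Fin (2 * r - 1)) ℝ)
    (hsymm : A.IsSymm)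
    (hdiag : ∀ i, A i i = 0)
    (hoff : ∀ i j, i ≠ j → ∃ m : ℤ, Odd m ∧ A i j = (m : ℝ))
    (M : Matrix (Fin (2 * r - 1)) (Fin (2 * r - 1)) ℝ)
    (hM : M = ((2 * r - 1 : ℝ)) • (1 : Matrix (Fin (2 * r - 1)) (Fin (2 * r - 1)) ℝ) - A * A)
    (hpsd : M.PosSemidef) (hrank : M.rank = 1)
    (hMdiag : ∀ i, M i i = 1) :
    (∀ i j, M i j = 1 ∨ M i j = -1) ∧
    ∃ d : Fin (2 * r - 1) → ℝ, (∀ i, d i = 1 ∨ d i = -1) ∧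
      ∀ i j, d i * M i j * d j = 1 := by
  have hn : 0 < 2 * r - 1 := by omega
  -- symmetry of M
  have hMsymm : ∀ i j, M i j = M j i := by
    intro i j
    have := hpsd.isHermitian
    have h := congrFun (congrFun this.symm i) j
    simpa [Matrix.conjTranspose_apply] using h
  -- rank one: range of mulVecLin is 1-dimensional
  rw [Matrix.rank] at hrank
  rw [finrank_eq_one_iff'] at hrank
  obtain ⟨⟨v, hvmem⟩, hv0, hv⟩ := hrank
  -- columns of M are multiples of v
  have hcol : ∀ j, ∃ c : ℝ, ∀ i, M i j = c * v i := by
    intro j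
    have hmem : M.mulVec (Pi.single j 1) ∈ LinearMap.range M.mulVecLin :=
      ⟨Pi.single j 1, rfl⟩
    obtain ⟨c, hc⟩ := hv ⟨_, hmem⟩
    refine ⟨c, fun i => ?_⟩
    have := congrArg (fun w => (w : Fin (2*r-1) → ℝ) i) (congrArg Subtype.val hc)
    simp only [Submodule.coe_smul, Pi.smul_apply, smul_eq_mul] at this
    rw [this, Matrix.mulVec_single]
    simp
  choose c hc using hcol
  -- key: M i j * M j i = M i i * M j j
  have key : ∀ i j k l, M i j * M k l = M i l * M k j := by
    intro i j k l
    rw [hc j i, hc l k, hc l i, hc j k]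
    ring
  have hsq : ∀ i j, M i j * M i j = 1 := by
    intro i j
    have := key i j j i
    rw [hMdiag i, hMdiag j, ← hMsymm i j] at this
    linarith
  have hpm : ∀ i j, M i j = 1 ∨ M i j = -1 := by
    intro i j
    have := hsq i j
    have h : (M i j - 1) * (M i j + 1) = 0 := by ring_nf; linarith
    rcases mul_eq_zero.mp h with h | h
    · left; linarith
    · right; linarith
  refine ⟨hpm, ?_⟩
  set z : Fin (2 * r - 1) := ⟨0, hn⟩
  refine ⟨fun i => M i z, fun i => hpm i z, fun i j => ?_⟩
  have h1 : M i z * M j z = M i j * M z z := by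
    rw [hMsymm j z]; exact key i z z j
  have h2 : M i z * M i j * M j z = M i j * M i j := by
    rw [mul_comm (M i z) (M i j), mul_assoc, h1, hMdiag z]
    ring
  rw [h2, hsq]
end

section
/- Let ℓ ≥ 1 and let G be the 3ℓ×3ℓ block matrix with diagonal blocks B = [[1, −5/13, −5/13],[−5/13, 1, −5/13],[−5/13, −5/13, 1]] and all off-diagonal blocks equal to (1/13)J₃. Then G is positive semidefinite of rank 2ℓ + 1. -/
/-!
Write `G = A Aᵀ` with `A = [c·𝟙 | d·(I_l ⊗ E)]`, where `𝟙` is the all-ones column, the rows of the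
`3 × 2` matrix `E` are three unit vectors at angle `2π/3`, `c² = 1/13` and `d² = 12/13`. Then `G` is
positive semidefinite, and `rank G = rank A`. The columns of `E` sum to zero and `EᵀE = (3/2) I`, so
`AᵀA` is diagonal with nonzero entries `3lc²` and `(3/2)d²`; hence `A` has full column rank `2l + 1`.
-/

open Matrix
open scoped Kronecker

theorem Matrix.rank_mul_transpose_of_isUnit {m n R : Type*} [Fintype m] [Fintype n]
    [DecidableEq n] [Field R] [LinearOrder R] [IsStrictOrderedRing R] {A : Matrix m n R}
    (h : IsUnit (Aᵀ * A)) : (A * Aᵀ).rank = Fintype.card n := by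
  rw [rank_self_mul_transpose, ← rank_transpose_mul_self, rank_of_isUnit _ h]

noncomputable def triangleFrame : Matrix (Fin 3) (Fin 2) ℝ :=
  !![1, 0; -1/2, √3/2; -1/2, -(√3/2)]

lemma triangleFrame_mul_transpose :
    triangleFrame * triangleFrameᵀ = of fun s s' => if s = s' then 1 else -1/2 := by
  have h3 : √3 * √3 = 3 := Real.mul_self_sqrt (by norm_num)
  ext s s'
  fin_cases s <;> fin_cases s' <;> simp [triangleFrame, mul_apply, Fin.sum_univ_two] <;> linarith

lemma transpose_triangleFrame_mul : triangleFrameᵀ * triangleFrame = (3/2 : ℝ) • 1 := by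
  have h3 : √3 * √3 = 3 := Real.mul_self_sqrt (by norm_num)
  ext t t'
  fin_cases t <;> fin_cases t' <;> simp [triangleFrame, mul_apply, Fin.sum_univ_three] <;> linarith

lemma sum_triangleFrame (t : Fin 2) : ∑ s, triangleFrame s t = 0 := by
  fin_cases t <;> simp [triangleFrame, Fin.sum_univ_three]
  norm_num

section BlockFactor

variable {l : ℕ}

noncomputable def blockFactor (l : ℕ) (c d : ℝ) :
    Matrix (Fin l × Fin 3) (Unit ⊕ Fin l × Fin 2) ℝ :=
  fromCols (of fun _ _ => c) (d • ((1 : Matrix (Fin l) (Fin l) ℝ) ⊗ₖ triangleFrame))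

lemma blockFactor_mul_transpose (c d : ℝ) :
    blockFactor l c d * (blockFactor l c d)ᵀ = of fun i j =>
      c ^ 2 + if i.1 = j.1 then d ^ 2 * (if i.2 = j.2 then 1 else -1/2) else 0 := by
  rw [blockFactor, transpose_fromCols, fromCols_mul_fromRows, transpose_smul, Matrix.smul_mul,
    Matrix.mul_smul, smul_smul, ← kroneckerMap_transpose, transpose_one, ← mul_kronecker_mul,
    one_mul, triangleFrame_mul_transpose]
  ext i j
  simp only [Matrix.add_apply, mul_apply, Fintype.sum_unique, transpose_apply, of_apply,
    Matrix.smul_apply, kroneckerMap_apply, one_apply]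
  split_ifs <;> ring

lemma transpose_blockFactor_mul (c d : ℝ) :
    (blockFactor l c d)ᵀ * blockFactor l c d =
      diagonal (Sum.elim (fun _ => 3 * l * c ^ 2) (fun _ => 3/2 * d ^ 2)) := by
  have hcross : ((1 : Matrix (Fin l) (Fin l) ℝ) ⊗ₖ triangleFrame)ᵀ *
      (of fun _ _ => c : Matrix (Fin l × Fin 3) Unit ℝ) = 0 := by
    ext q u
    simp [mul_apply, Fintype.sum_prod_type, one_apply, ← Finset.sum_mul, sum_triangleFrame]
  rw [blockFactor, transpose_fromCols, fromRows_mul_fromCols, ← fromBlocks_diagonal]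
  congr 1
  · ext
    simp only [mul_apply, transpose_apply, of_apply, Finset.sum_const, Finset.card_univ,
      Fintype.card_prod, Fintype.card_fin, nsmul_eq_mul, diagonal_apply_eq]
    push_cast
    ring
  · rw [Matrix.mul_smul, ← transpose_transpose (_ ⊗ₖ _), ← transpose_mul, hcross, transpose_zero,
      smul_zero]
  · rw [transpose_smul, Matrix.smul_mul, hcross, smul_zero]
  · rw [transpose_smul, Matrix.smul_mul, Matrix.mul_smul, smul_smul, ← kroneckerMap_transpose,
      transpose_one, ← mul_kronecker_mul, one_mul, transpose_triangleFrame_mul, kronecker_smul,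
      one_kronecker_one, smul_smul, smul_one_eq_diagonal]
    congr 1
    ext
    ring

lemma rank_blockFactor_mul_transpose {c d : ℝ} (hl : l ≠ 0) (hc : c ≠ 0) (hd : d ≠ 0) :
    (blockFactor l c d * (blockFactor l c d)ᵀ).rank = 2 * l + 1 := by
  have hunit : IsUnit ((blockFactor l c d)ᵀ * blockFactor l c d) := by
    rw [transpose_blockFactor_mul, isUnit_diagonal, Pi.isUnit_iff]
    rintro (_ | _) <;> simp [hl, hc, hd]
  rw [rank_mul_transpose_of_isUnit hunit]
  simp only [Fintype.card_sum, Fintype.card_unique, Fintype.card_prod, Fintype.card_fin]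
  ring

end BlockFactor

theorem stmt_18 (l : ℕ) (hl : 1 ≤ l)
    (G : Matrix (Fin l × Fin 3) (Fin l × Fin 3) ℝ)
    (hG : ∀ i j : Fin l × Fin 3, G i j =
      if i.1 = j.1 then (if i.2 = j.2 then 1 else -5/13) else 1/13) :
    G.PosSemidef ∧ G.rank = 2 * l + 1 := by
  have hGA : G = blockFactor l √(1/13) √(12/13) * (blockFactor l √(1/13) √(12/13))ᵀ := by
    ext i j
    rw [hG, blockFactor_mul_transpose]
    simp only [of_apply, Real.sq_sqrt (by norm_num : (0 : ℝ) ≤ 1/13),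
      Real.sq_sqrt (by norm_num : (0 : ℝ) ≤ 12/13)]
    split_ifs <;> norm_num
  refine ⟨hGA ▸ posSemidef_self_mul_conjTranspose _, ?_⟩
  rw [hGA, rank_blockFactor_mul_transpose (by omega) (by positivity) (by positivity)]
end
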